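/- Define Z_E = W_p(E♯*μ̂_n, E♯*μ) − 𝔼[W_p(E♯*μ̂_n, E♯*μ)] for E ∈ S_{d,k}, where μ̂_n = (1/n)Σδ_{X_i} with X_i i.i.d. from μ ∈ P_p(ℝ^d). Then for all U, V ∈ S_{d,k}, |Z_U − Z_V| ≤ L‖U − V‖_op almost surely, where L = 2(𝔼‖X‖^p)^{1/p} + (n^{-1}Σ‖X_i‖^p)^{1/p} + 𝔼[(n^{-1}Σ‖X_i‖^p)^{1/p}], and 𝔼[L] ≤ 4(𝔼‖X‖^p)^{1/p}. -/

import Mathlib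

open MeasureTheory Filter Topology
open scoped ENNReal BoundedContinuousFunction

noncomputable def Wp {α : Type*} [MeasurableSpace α] [PseudoMetricSpace α]
    (p : ℝ) (μ ν : Measure α) : ℝ≥0∞ :=
  ⨅ π ∈ {π : Measure (α × α) | π.map Prod.fst = μ ∧ π.map Prod.snd = ν},
    (∫⁻ z, ENNReal.ofReal (dist z.1 z.2 ^ p) ∂π) ^ (1 / p)

def Stiefel (d k : ℕ) : Set (Matrix (Fin d) (Fin k) ℝ) :=
  {E | E.transpose * E = 1}

noncomputable def proj {d k : ℕ} (E : Matrix (Fin d) (Fin k) ℝ)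
    (x : EuclideanSpace ℝ (Fin d)) : EuclideanSpace ℝ (Fin k) :=
  (WithLp.equiv 2 (Fin k → ℝ)).symm (E.transpose.mulVec ((WithLp.equiv 2 (Fin d → ℝ)) x))

noncomputable def PRW (p : ℝ) {d : ℕ} (k : ℕ)
    (μ ν : Measure (EuclideanSpace ℝ (Fin d))) : ℝ≥0∞ :=
  ⨆ E ∈ Stiefel d k, Wp p (μ.map (proj E)) (ν.map (proj E))

def WeakConv {α : Type*} [MeasurableSpace α] [TopologicalSpace α]
    (μs : ℕ → Measure α) (μ : Measure α) : Prop :=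
  ∀ f : α →ᵇ ℝ, Tendsto (fun i => ∫ x, f x ∂(μs i)) atTop (𝓝 (∫ x, f x ∂μ))

noncomputable def empMeasure {α : Type*} [MeasurableSpace α] {n : ℕ} (X : Fin n → α) :
    Measure α :=
  (n : ℝ≥0∞)⁻¹ • ∑ i, Measure.dirac (X i)

instance matMeas {d k : ℕ} : MeasurableSpace (Matrix (Fin d) (Fin k) ℝ) :=
  MeasurableSpace.pi

noncomputable def IPRW (p : ℝ) {d k : ℕ} (σ : Measure (Matrix (Fin d) (Fin k) ℝ))
    (μ ν : Measure (EuclideanSpace ℝ (Fin d))) : ℝ≥0∞ :=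
  (∫⁻ E, Wp p (μ.map (proj E)) (ν.map (proj E)) ^ p ∂σ) ^ (1 / p)

noncomputable def projL {d k : ℕ} (E : Matrix (Fin d) (Fin k) ℝ) :
    EuclideanSpace ℝ (Fin d) →L[ℝ] EuclideanSpace ℝ (Fin k) :=
  LinearMap.toContinuousLinearMap (Matrix.toEuclideanLin E.transpose)

/-! For a fixed sample, `E ↦ W_p(E♯μ̂_n, E♯μ)` is Lipschitz: by the triangle inequality for `W_p`
(couplings are glued along a disintegration) the increment from `V` to `U` is at most
`W_p(U♯μ̂_n, V♯μ̂_n) + W_p(U♯μ, V♯μ)`, and the coupling `x ↦ (Uᵀx, Vᵀx)` bounds `W_p(U♯ρ, V♯ρ)` by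
`‖U - V‖_op` times `(∫ ‖x‖^p dρ)^{1/p}`. Centering adds the expectation of the same bound, and
Jensen's inequality for the concave map `t ↦ t^{1/p}` gives
`𝔼 (n⁻¹ ∑ ‖X_i‖^p)^{1/p} ≤ (𝔼 ‖X‖^p)^{1/p}`. Measurability of the centred variables comes from
`W_p(E♯μ̂_n, E♯μ)` being Lipschitz in the sample points as well. -/

open ProbabilityTheory

section Gluing

variable {α : Type*} [MeasurableSpace α] [StandardBorelSpace α] [Nonempty α]

lemma exists_gluing {π₁ π₂ : Measure (α × α)} [IsFiniteMeasure π₁] [IsFiniteMeasure π₂]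
    (h : π₁.map Prod.snd = π₂.map Prod.fst) :
    ∃ τ : Measure (α × α × α),
      τ.map (fun t => (t.2.1, t.1)) = π₁ ∧ τ.map (fun t => (t.1, t.2.2)) = π₂ := by
  set ρ := π₁.map Prod.swap
  have hρ : ρ.fst = π₂.fst := by
    rw [Measure.fst, Measure.map_map measurable_fst measurable_swap]; exact h
  refine ⟨π₂.fst ⊗ₘ (ρ.condKernel ×ₖ π₂.condKernel), ?_, ?_⟩
  · rw [show (fun t : α × α × α => (t.2.1, t.1)) = Prod.swap ∘ Prod.map id Prod.fst from rfl,
      ← Measure.map_map measurable_swap (measurable_id.prodMap measurable_fst),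
      ← Measure.compProd_map measurable_fst, ← Kernel.fst_eq, Kernel.fst_prod, ← hρ,
      ρ.disintegrate, Measure.map_map measurable_swap measurable_swap, Prod.swap_swap_eq,
      Measure.map_id]
  · rw [show (fun t : α × α × α => (t.1, t.2.2)) = Prod.map id Prod.snd from rfl,
      ← Measure.compProd_map measurable_snd, ← Kernel.snd_eq, Kernel.snd_prod,
      π₂.disintegrate]

end Gluing

section Coupling

variable {α : Type*} [MeasurableSpace α] [PseudoMetricSpace α] {p : ℝ}

lemma Wp_eq_iInf_edist (hp : 0 ≤ p) (μ ν : Measure α) :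
    Wp p μ ν = ⨅ π ∈ {π : Measure (α × α) | π.map Prod.fst = μ ∧ π.map Prod.snd = ν},
      (∫⁻ z, edist z.1 z.2 ^ p ∂π) ^ (1 / p) := by
  simp only [Wp, edist_dist, ENNReal.ofReal_rpow_of_nonneg dist_nonneg hp]

lemma Wp_le_of_coupling (hp : 0 ≤ p) {μ ν : Measure α} {π : Measure (α × α)}
    (h₁ : π.map Prod.fst = μ) (h₂ : π.map Prod.snd = ν) :
    Wp p μ ν ≤ (∫⁻ z, edist z.1 z.2 ^ p ∂π) ^ (1 / p) := by
  rw [Wp_eq_iInf_edist hp]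
  exact iInf₂_le π ⟨h₁, h₂⟩

variable [BorelSpace α] [SecondCountableTopology α]

lemma Wp_map_le (hp : 0 ≤ p) {β : Type*} [MeasurableSpace β] (ρ : Measure β) {f g : β → α}
    (hf : Measurable f) (hg : Measurable g) :
    Wp p (ρ.map f) (ρ.map g) ≤ (∫⁻ x, edist (f x) (g x) ^ p ∂ρ) ^ (1 / p) := by
  have hfg : Measurable fun x => (f x, g x) := hf.prodMk hg
  refine (Wp_le_of_coupling hp (π := ρ.map fun x => (f x, g x)) ?_ ?_).trans_eq ?_
  · rw [Measure.map_map measurable_fst hfg]; rfl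
  · rw [Measure.map_map measurable_snd hfg]; rfl
  · rw [lintegral_map (measurable_edist.pow_const p) hfg]

lemma Wp_self (hp : 0 < p) (ν : Measure α) : Wp p ν ν = 0 := by
  have h := Wp_map_le hp.le ν measurable_id measurable_id
  rw [Measure.map_id] at h
  refine le_antisymm (h.trans_eq ?_) bot_le
  simp [ENNReal.zero_rpow_of_pos hp, hp]

lemma lintegral_edist_rpow_triangle (hp : 1 ≤ p) {β : Type*} [MeasurableSpace β] (ρ : Measure β)
    {f g h : β → α} (hf : Measurable f) (hg : Measurable g) (hh : Measurable h) :
    (∫⁻ x, edist (f x) (h x) ^ p ∂ρ) ^ (1 / p) ≤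
      (∫⁻ x, edist (f x) (g x) ^ p ∂ρ) ^ (1 / p) + (∫⁻ x, edist (g x) (h x) ^ p ∂ρ) ^ (1 / p) :=
  calc _ ≤ (∫⁻ x, (edist (f x) (g x) + edist (g x) (h x)) ^ p ∂ρ) ^ (1 / p) := by
        gcongr with x; exact edist_triangle _ _ _
    _ ≤ _ := ENNReal.lintegral_Lp_add_le (hf.edist hg).aemeasurable (hg.edist hh).aemeasurable hp

variable [StandardBorelSpace α] [Nonempty α]

lemma Wp_triangle (hp : 1 ≤ p) (μ ν κ : Measure α) [IsFiniteMeasure ν] :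
    Wp p μ κ ≤ Wp p μ ν + Wp p ν κ := by
  have hp0 : 0 ≤ p := zero_le_one.trans hp
  rw [Wp_eq_iInf_edist hp0 μ ν, Wp_eq_iInf_edist hp0 ν κ, iInf_subtype', iInf_subtype',
    ENNReal.iInf_add]
  refine le_iInf fun ⟨π₁, hμ, hν₁⟩ => ?_
  rw [ENNReal.add_iInf]
  refine le_iInf fun ⟨π₂, hν₂, hκ⟩ => ?_
  have : IsFiniteMeasure (π₁.map Prod.snd) := hν₁ ▸ inferInstance
  have : IsFiniteMeasure π₁ := Measure.isFiniteMeasure_of_map measurable_snd.aemeasurable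
  have : IsFiniteMeasure (π₂.map Prod.fst) := hν₂ ▸ inferInstance
  have : IsFiniteMeasure π₂ := Measure.isFiniteMeasure_of_map measurable_fst.aemeasurable
  obtain ⟨τ, hτ₁, hτ₂⟩ := exists_gluing (hν₁.trans hν₂.symm)
  have hm₁ : Measurable fun t : α × α × α => (t.2.1, t.1) := by fun_prop
  have hm₂ : Measurable fun t : α × α × α => (t.1, t.2.2) := by fun_prop
  have hμτ : τ.map (fun t => t.2.1) = μ := by
    rw [← hμ, ← hτ₁, Measure.map_map measurable_fst hm₁]; rfl
  have hκτ : τ.map (fun t => t.2.2) = κ := by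
    rw [← hκ, ← hτ₂, Measure.map_map measurable_snd hm₂]; rfl
  calc Wp p μ κ = Wp p (τ.map fun t => t.2.1) (τ.map fun t => t.2.2) := by rw [hμτ, hκτ]
    _ ≤ (∫⁻ t, edist t.2.1 t.2.2 ^ p ∂τ) ^ (1 / p) := Wp_map_le hp0 τ (by fun_prop) (by fun_prop)
    _ ≤ (∫⁻ t, edist t.2.1 t.1 ^ p ∂τ) ^ (1 / p) + (∫⁻ t, edist t.1 t.2.2 ^ p ∂τ) ^ (1 / p) :=
        lintegral_edist_rpow_triangle hp τ (by fun_prop) (by fun_prop) (by fun_prop)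
    _ = (∫⁻ z, edist z.1 z.2 ^ p ∂π₁) ^ (1 / p) + (∫⁻ z, edist z.1 z.2 ^ p ∂π₂) ^ (1 / p) := by
        rw [← hτ₁, ← hτ₂, lintegral_map (measurable_edist.pow_const p) hm₁,
          lintegral_map (measurable_edist.pow_const p) hm₂]

end Coupling

lemma Wp_map_le_eLpNorm_sub {E : Type*} [NormedAddCommGroup E] [MeasurableSpace E] [BorelSpace E]
    [SecondCountableTopology E] {p : ℝ} (hp : 0 < p) {β : Type*} [MeasurableSpace β]
    (ρ : Measure β) {f g : β → E} (hf : Measurable f) (hg : Measurable g) :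
    Wp p (ρ.map f) (ρ.map g) ≤ eLpNorm (f - g) (ENNReal.ofReal p) ρ := by
  rw [eLpNorm_eq_lintegral_rpow_enorm_toReal (by simpa using hp) ENNReal.ofReal_ne_top,
    ENNReal.toReal_ofReal hp.le]
  simpa only [edist_eq_enorm_sub, Pi.sub_apply] using Wp_map_le hp.le ρ hf hg

section Projection

variable {d k : ℕ} {p : ℝ}

lemma measurable_proj (E : Matrix (Fin d) (Fin k) ℝ) : Measurable (proj E) :=
  (projL E).continuous.measurable

lemma projL_sub (U V : Matrix (Fin d) (Fin k) ℝ) : projL (U - V) = projL U - projL V := by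
  simp [projL, Matrix.transpose_sub]

lemma Wp_map_proj_map_proj_le (hp : 0 < p) (ρ : Measure (EuclideanSpace ℝ (Fin d)))
    (U V : Matrix (Fin d) (Fin k) ℝ) :
    Wp p (ρ.map (proj U)) (ρ.map (proj V))
      ≤ ‖projL (U - V)‖ₑ * eLpNorm id (ENNReal.ofReal p) ρ := by
  refine (Wp_map_le_eLpNorm_sub hp ρ (measurable_proj U) (measurable_proj V)).trans ?_
  have h : proj U - proj V = projL (U - V) := by rw [projL_sub]; rfl
  rw [h]
  exact eLpNorm_le_nnreal_smul_eLpNorm_of_ae_le_mul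
    (ae_of_all _ fun x => (projL (U - V)).le_opNNNorm x) _

lemma Wp_map_proj_le_add (hp : 1 ≤ p) (ρ₁ ρ₂ : Measure (EuclideanSpace ℝ (Fin d)))
    [IsFiniteMeasure ρ₁] [IsFiniteMeasure ρ₂] (U V : Matrix (Fin d) (Fin k) ℝ) :
    Wp p (ρ₁.map (proj U)) (ρ₂.map (proj U))
      ≤ Wp p (ρ₁.map (proj V)) (ρ₂.map (proj V))
        + ‖projL (U - V)‖ₑ
          * (eLpNorm id (ENNReal.ofReal p) ρ₁ + eLpNorm id (ENNReal.ofReal p) ρ₂) := by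
  have hp0 : 0 < p := zero_lt_one.trans_le hp
  calc Wp p (ρ₁.map (proj U)) (ρ₂.map (proj U))
      ≤ Wp p (ρ₁.map (proj U)) (ρ₁.map (proj V))
        + (Wp p (ρ₁.map (proj V)) (ρ₂.map (proj V)) + Wp p (ρ₂.map (proj V)) (ρ₂.map (proj U))) :=
        (Wp_triangle hp _ _ _).trans (add_le_add_right (Wp_triangle hp _ _ _) _)
    _ ≤ ‖projL (U - V)‖ₑ * eLpNorm id (ENNReal.ofReal p) ρ₁
        + (Wp p (ρ₁.map (proj V)) (ρ₂.map (proj V))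
          + ‖projL (U - V)‖ₑ * eLpNorm id (ENNReal.ofReal p) ρ₂) := by
        gcongr
        · exact Wp_map_proj_map_proj_le hp0 ρ₁ U V
        · simpa only [projL_sub, enorm_sub_rev] using Wp_map_proj_map_proj_le hp0 ρ₂ V U
    _ = _ := by ring

lemma map_proj_zero (ρ : Measure (EuclideanSpace ℝ (Fin d))) [IsProbabilityMeasure ρ] :
    ρ.map (proj (0 : Matrix (Fin d) (Fin k) ℝ)) = Measure.dirac 0 := by
  have h : proj (0 : Matrix (Fin d) (Fin k) ℝ) = fun _ => 0 := funext fun x => by simp [proj]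
  rw [h, Measure.map_const, measure_univ, one_smul]

lemma Wp_map_proj_le (hp : 1 ≤ p) (ρ₁ ρ₂ : Measure (EuclideanSpace ℝ (Fin d)))
    [IsProbabilityMeasure ρ₁] [IsProbabilityMeasure ρ₂] (E : Matrix (Fin d) (Fin k) ℝ) :
    Wp p (ρ₁.map (proj E)) (ρ₂.map (proj E))
      ≤ ‖projL E‖ₑ * (eLpNorm id (ENNReal.ofReal p) ρ₁ + eLpNorm id (ENNReal.ofReal p) ρ₂) := by
  simpa [map_proj_zero, Wp_self (zero_lt_one.trans_le hp)] using Wp_map_proj_le_add hp ρ₁ ρ₂ E 0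

end Projection

section EmpiricalMeasure

variable {α β : Type*} [MeasurableSpace α] [MeasurableSpace β] {n : ℕ}

lemma isProbabilityMeasure_empMeasure (hn : 0 < n) (x : Fin n → α) :
    IsProbabilityMeasure (empMeasure x) := by
  constructor
  simp only [empMeasure, Measure.smul_apply, Measure.finsetSum_apply, measure_univ,
    smul_eq_mul, Finset.sum_const, Finset.card_univ, Fintype.card_fin, nsmul_eq_mul, mul_one]
  exact ENNReal.inv_mul_cancel (Nat.cast_ne_zero.mpr hn.ne') (ENNReal.natCast_ne_top n)

lemma map_empMeasure (x : Fin n → α) {f : α → β} (hf : Measurable f) :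
    (empMeasure x).map f = empMeasure (f ∘ x) := by
  simp only [empMeasure, Measure.map_smul, Measure.map_finset_sum hf.aemeasurable,
    Measure.map_dirac' hf, Function.comp_apply]

lemma lintegral_empMeasure [MeasurableSingletonClass α] (x : Fin n → α) (f : α → ℝ≥0∞) :
    ∫⁻ a, f a ∂(empMeasure x) = (n : ℝ≥0∞)⁻¹ * ∑ i, f (x i) := by
  simp [empMeasure, lintegral_finsetSum_measure]

end EmpiricalMeasure

section Moments

variable {d n : ℕ} {p : ℝ}

lemma eLpNorm_id_eq_ofReal_integral (hp : 0 < p) {μ : Measure (EuclideanSpace ℝ (Fin d))}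
    (hmom : Integrable (fun x => ‖x‖ ^ p) μ) :
    eLpNorm id (ENNReal.ofReal p) μ = ENNReal.ofReal ((∫ x, ‖x‖ ^ p ∂μ) ^ (1 / p)) := by
  have hp' : ENNReal.ofReal p ≠ 0 := by simpa using hp
  have hL : MemLp id (ENNReal.ofReal p) μ := by
    rw [← integrable_norm_rpow_iff aestronglyMeasurable_id hp' ENNReal.ofReal_ne_top,
      ENNReal.toReal_ofReal hp.le]
    exact hmom
  rw [hL.eLpNorm_eq_integral_rpow_norm hp' ENNReal.ofReal_ne_top, ENNReal.toReal_ofReal hp.le,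
    one_div]
  rfl

lemma eLpNorm_id_empMeasure (hn : 0 < n) (hp : 0 < p) (x : Fin n → EuclideanSpace ℝ (Fin d)) :
    eLpNorm id (ENNReal.ofReal p) (empMeasure x)
      = ENNReal.ofReal (((n : ℝ)⁻¹ * ∑ i, ‖x i‖ ^ p) ^ (1 / p)) := by
  rw [eLpNorm_eq_lintegral_rpow_enorm_toReal (by simpa using hp) ENNReal.ofReal_ne_top,
    ENNReal.toReal_ofReal hp.le, lintegral_empMeasure,
    ← ENNReal.ofReal_rpow_of_nonneg (by positivity) (by positivity),
    ENNReal.ofReal_mul (by positivity), ENNReal.ofReal_inv_of_pos (by exact_mod_cast hn),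
    ENNReal.ofReal_natCast, ENNReal.ofReal_sum_of_nonneg (fun i _ => by positivity)]
  simp only [id, ← ofReal_norm, ENNReal.ofReal_rpow_of_nonneg (norm_nonneg _) hp.le]

end Moments

lemma ENNReal.abs_toReal_sub_toReal_le {a b : ℝ≥0∞} (ha : a ≠ ⊤) (hb : b ≠ ⊤) {c : ℝ}
    (hc : 0 ≤ c) (hab : a ≤ b + ENNReal.ofReal c) (hba : b ≤ a + ENNReal.ofReal c) :
    |a.toReal - b.toReal| ≤ c := by
  have h₁ := ENNReal.toReal_mono (ENNReal.add_ne_top.2 ⟨hb, ENNReal.ofReal_ne_top⟩) hab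
  have h₂ := ENNReal.toReal_mono (ENNReal.add_ne_top.2 ⟨ha, ENNReal.ofReal_ne_top⟩) hba
  rw [ENNReal.toReal_add hb ENNReal.ofReal_ne_top, ENNReal.toReal_ofReal hc] at h₁
  rw [ENNReal.toReal_add ha ENNReal.ofReal_ne_top, ENNReal.toReal_ofReal hc] at h₂
  exact abs_sub_le_iff.2 ⟨by linarith, by linarith⟩

section EmpiricalWasserstein

variable {d k n : ℕ} {p : ℝ} {μ : Measure (EuclideanSpace ℝ (Fin d))} [IsProbabilityMeasure μ]

lemma Wp_map_proj_empMeasure_le (hn : 0 < n) (hp : 0 < p) (E : Matrix (Fin d) (Fin k) ℝ)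
    (x y : Fin n → EuclideanSpace ℝ (Fin d)) :
    Wp p ((empMeasure x).map (proj E)) ((empMeasure y).map (proj E))
      ≤ ENNReal.ofReal (‖projL E‖ * dist x y) := by
  -- both are images of the uniform law on indices, which couples `x i` with `y i`
  have hid (z : Fin n → EuclideanSpace ℝ (Fin d)) :
      (empMeasure z).map (proj E) = (empMeasure (id : Fin n → Fin n)).map (proj E ∘ z) := by
    rw [map_empMeasure _ (measurable_proj E), map_empMeasure _ (measurable_of_finite _)]; rfl
  have := isProbabilityMeasure_empMeasure hn (id : Fin n → Fin n)
  rw [hid x, hid y]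
  refine (Wp_map_le_eLpNorm_sub hp _ (measurable_of_finite _) (measurable_of_finite _)).trans ?_
  refine (eLpNorm_le_of_ae_bound (C := ‖projL E‖ * dist x y) (ae_of_all _ fun i => ?_)).trans_eq
    (by simp)
  calc ‖(proj E ∘ x - proj E ∘ y) i‖ = ‖projL E (x i - y i)‖ := by rw [map_sub]; rfl
    _ ≤ ‖projL E‖ * ‖x i - y i‖ := (projL E).le_opNorm _
    _ ≤ ‖projL E‖ * dist x y := by
        gcongr; rw [← dist_eq_norm]; exact dist_le_pi_dist x y i

lemma Wp_empMeasure_map_proj_le (hn : 0 < n) (hp : 1 ≤ p)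
    (hmom : Integrable (fun x => ‖x‖ ^ p) μ) (E : Matrix (Fin d) (Fin k) ℝ)
    (x : Fin n → EuclideanSpace ℝ (Fin d)) :
    Wp p ((empMeasure x).map (proj E)) (μ.map (proj E))
      ≤ ENNReal.ofReal ((((n : ℝ)⁻¹ * ∑ i, ‖x i‖ ^ p) ^ (1 / p)
          + (∫ x, ‖x‖ ^ p ∂μ) ^ (1 / p)) * ‖projL E‖) := by
  have hp0 : 0 < p := zero_lt_one.trans_le hp
  have := isProbabilityMeasure_empMeasure hn x
  have h := Wp_map_proj_le hp (empMeasure x) μ E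
  rwa [eLpNorm_id_empMeasure hn hp0 x, eLpNorm_id_eq_ofReal_integral hp0 hmom,
    ← ENNReal.ofReal_add (by positivity) (by positivity), ← ofReal_norm,
    ← ENNReal.ofReal_mul (norm_nonneg _), mul_comm] at h

lemma Wp_empMeasure_map_proj_ne_top (hn : 0 < n) (hp : 1 ≤ p)
    (hmom : Integrable (fun x => ‖x‖ ^ p) μ) (E : Matrix (Fin d) (Fin k) ℝ)
    (x : Fin n → EuclideanSpace ℝ (Fin d)) :
    Wp p ((empMeasure x).map (proj E)) (μ.map (proj E)) ≠ ⊤ :=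
  ne_top_of_le_ne_top ENNReal.ofReal_ne_top (Wp_empMeasure_map_proj_le hn hp hmom E x)

lemma toReal_Wp_empMeasure_map_proj_le (hn : 0 < n) (hp : 1 ≤ p)
    (hmom : Integrable (fun x => ‖x‖ ^ p) μ) (E : Matrix (Fin d) (Fin k) ℝ)
    (x : Fin n → EuclideanSpace ℝ (Fin d)) :
    (Wp p ((empMeasure x).map (proj E)) (μ.map (proj E))).toReal
      ≤ (((n : ℝ)⁻¹ * ∑ i, ‖x i‖ ^ p) ^ (1 / p) + (∫ x, ‖x‖ ^ p ∂μ) ^ (1 / p)) * ‖projL E‖ :=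
  ENNReal.toReal_le_of_le_ofReal (by positivity) (Wp_empMeasure_map_proj_le hn hp hmom E x)

lemma Wp_empMeasure_map_proj_le_add (hn : 0 < n) (hp : 1 ≤ p)
    (hmom : Integrable (fun x => ‖x‖ ^ p) μ) (U V : Matrix (Fin d) (Fin k) ℝ)
    (x : Fin n → EuclideanSpace ℝ (Fin d)) :
    Wp p ((empMeasure x).map (proj U)) (μ.map (proj U))
      ≤ Wp p ((empMeasure x).map (proj V)) (μ.map (proj V))
        + ENNReal.ofReal ((((n : ℝ)⁻¹ * ∑ i, ‖x i‖ ^ p) ^ (1 / p)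
          + (∫ x, ‖x‖ ^ p ∂μ) ^ (1 / p)) * ‖projL (U - V)‖) := by
  have hp0 : 0 < p := zero_lt_one.trans_le hp
  have := isProbabilityMeasure_empMeasure hn x
  have h := Wp_map_proj_le_add hp (empMeasure x) μ U V
  rwa [eLpNorm_id_empMeasure hn hp0 x, eLpNorm_id_eq_ofReal_integral hp0 hmom,
    ← ENNReal.ofReal_add (by positivity) (by positivity), ← ofReal_norm,
    ← ENNReal.ofReal_mul (norm_nonneg _), mul_comm] at h

lemma abs_toReal_Wp_empMeasure_map_proj_sub_le (hn : 0 < n) (hp : 1 ≤ p)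
    (hmom : Integrable (fun x => ‖x‖ ^ p) μ) (U V : Matrix (Fin d) (Fin k) ℝ)
    (x : Fin n → EuclideanSpace ℝ (Fin d)) :
    |(Wp p ((empMeasure x).map (proj U)) (μ.map (proj U))).toReal
        - (Wp p ((empMeasure x).map (proj V)) (μ.map (proj V))).toReal|
      ≤ (((n : ℝ)⁻¹ * ∑ i, ‖x i‖ ^ p) ^ (1 / p) + (∫ x, ‖x‖ ^ p ∂μ) ^ (1 / p))
          * ‖projL (U - V)‖ := by
  refine ENNReal.abs_toReal_sub_toReal_le (Wp_empMeasure_map_proj_ne_top hn hp hmom U x)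
    (Wp_empMeasure_map_proj_ne_top hn hp hmom V x) (by positivity)
    (Wp_empMeasure_map_proj_le_add hn hp hmom U V x) ?_
  simpa only [projL_sub, norm_sub_rev] using Wp_empMeasure_map_proj_le_add hn hp hmom V U x

lemma lipschitzWith_toReal_Wp_empMeasure_map_proj (hn : 0 < n) (hp : 1 ≤ p)
    (hmom : Integrable (fun x => ‖x‖ ^ p) μ) (E : Matrix (Fin d) (Fin k) ℝ) :
    LipschitzWith ‖projL E‖₊ fun x : Fin n → EuclideanSpace ℝ (Fin d) =>
      (Wp p ((empMeasure x).map (proj E)) (μ.map (proj E))).toReal := by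
  have hp0 : 0 < p := zero_lt_one.trans_le hp
  refine LipschitzWith.of_dist_le_mul fun x y => ?_
  have := isProbabilityMeasure_empMeasure hn x
  have := isProbabilityMeasure_empMeasure hn y
  rw [Real.dist_eq, coe_nnnorm]
  refine ENNReal.abs_toReal_sub_toReal_le (Wp_empMeasure_map_proj_ne_top hn hp hmom E x)
    (Wp_empMeasure_map_proj_ne_top hn hp hmom E y) (by positivity) ?_ ?_
  · refine (Wp_triangle hp _ ((empMeasure y).map (proj E)) _).trans ?_
    rw [add_comm]
    gcongr
    exact Wp_map_proj_empMeasure_le hn hp0 E x y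
  · refine (Wp_triangle hp _ ((empMeasure x).map (proj E)) _).trans ?_
    rw [add_comm, dist_comm]
    gcongr
    exact Wp_map_proj_empMeasure_le hn hp0 E y x

end EmpiricalWasserstein

section Probability

variable {Ω : Type*} [MeasurableSpace Ω] {P : Measure Ω}

lemma abs_sub_integral_sub_sub_integral_le {a b h : Ω → ℝ} (ha : Integrable a P)
    (hb : Integrable b P) (hh : Integrable h P) (hab : ∀ ω, |a ω - b ω| ≤ h ω) (ω : Ω) :
    |(a ω - ∫ ω', a ω' ∂P) - (b ω - ∫ ω', b ω' ∂P)| ≤ h ω + ∫ ω', h ω' ∂P := by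
  have hint : |(∫ ω', a ω' ∂P) - ∫ ω', b ω' ∂P| ≤ ∫ ω', h ω' ∂P := by
    rw [← integral_sub ha hb]
    exact abs_integral_le_integral_abs.trans (integral_mono (ha.sub hb).abs hh hab)
  calc |(a ω - ∫ ω', a ω' ∂P) - (b ω - ∫ ω', b ω' ∂P)|
      = |(a ω - b ω) - ((∫ ω', a ω' ∂P) - ∫ ω', b ω' ∂P)| := by ring_nf
    _ ≤ |a ω - b ω| + |(∫ ω', a ω' ∂P) - ∫ ω', b ω' ∂P| := abs_sub _ _
    _ ≤ h ω + ∫ ω', h ω' ∂P := add_le_add (hab ω) hint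

lemma integrable_rpow_of_le_one [IsFiniteMeasure P] {f : Ω → ℝ} (hf : Integrable f P)
    (hf0 : ∀ ω, 0 ≤ f ω) {q : ℝ} (hq0 : 0 ≤ q) (hq1 : q ≤ 1) :
    Integrable (fun ω => f ω ^ q) P := by
  have h := integrable_norm_rpow_of_le hf.aestronglyMeasurable hq0 zero_le_one hq1
    (by simpa only [Real.rpow_one] using hf.norm)
  simpa only [Real.norm_of_nonneg (hf0 _)] using h

lemma integral_rpow_le_rpow_integral [IsProbabilityMeasure P] {f : Ω → ℝ} (hf : Integrable f P)
    (hf0 : ∀ ω, 0 ≤ f ω) {q : ℝ} (hq0 : 0 ≤ q) (hq1 : q ≤ 1) :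
    ∫ ω, f ω ^ q ∂P ≤ (∫ ω, f ω ∂P) ^ q :=
  (Real.concaveOn_rpow hq0 hq1).le_map_integral
    (continuousOn_id.rpow_const fun _ _ => Or.inr hq0) isClosed_Ici (ae_of_all _ hf0) hf
    (integrable_rpow_of_le_one hf hf0 hq0 hq1)

variable {E : Type*} [MeasurableSpace E] {μ : Measure E} {n : ℕ} {X : Fin n → Ω → E}

lemma integrable_empirical_mean {f : E → ℝ} (hf : Integrable f μ) (hX : ∀ i, Measurable (X i))
    (hlaw : ∀ i, P.map (X i) = μ) :
    Integrable (fun ω => (n : ℝ)⁻¹ * ∑ i, f (X i ω)) P :=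
  (integrable_finsetSum _ fun i _ => ((hlaw i).symm ▸ hf).comp_measurable (hX i)).const_mul _

lemma integral_empirical_mean (hn : 0 < n) {f : E → ℝ} (hf : Integrable f μ)
    (hX : ∀ i, Measurable (X i)) (hlaw : ∀ i, P.map (X i) = μ) :
    ∫ ω, (n : ℝ)⁻¹ * ∑ i, f (X i ω) ∂P = ∫ x, f x ∂μ := by
  have h (i : Fin n) : ∫ ω, f (X i ω) ∂P = ∫ x, f x ∂μ := by
    rw [← hlaw i, integral_map (hX i).aemeasurable ((hlaw i).symm ▸ hf.aestronglyMeasurable)]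
  rw [integral_const_mul, integral_finsetSum _ fun i _ =>
    ((hlaw i).symm ▸ hf).comp_measurable (hX i)]
  simp only [h, Finset.sum_const, Finset.card_univ, Fintype.card_fin, nsmul_eq_mul]
  field_simp

variable {p : ℝ} [IsProbabilityMeasure P] [NormedAddCommGroup E]

lemma integrable_empirical_moment_rpow (hp : 1 ≤ p) (hX : ∀ i, Measurable (X i))
    (hlaw : ∀ i, P.map (X i) = μ) (hmom : Integrable (fun x => ‖x‖ ^ p) μ) :
    Integrable (fun ω => ((n : ℝ)⁻¹ * ∑ i, ‖X i ω‖ ^ p) ^ (1 / p)) P :=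
  integrable_rpow_of_le_one (integrable_empirical_mean hmom hX hlaw) (fun ω => by positivity)
    (by positivity) ((div_le_one (zero_lt_one.trans_le hp)).2 hp)

lemma integral_empirical_moment_rpow_le (hn : 0 < n) (hp : 1 ≤ p) (hX : ∀ i, Measurable (X i))
    (hlaw : ∀ i, P.map (X i) = μ) (hmom : Integrable (fun x => ‖x‖ ^ p) μ) :
    ∫ ω, ((n : ℝ)⁻¹ * ∑ i, ‖X i ω‖ ^ p) ^ (1 / p) ∂P ≤ (∫ x, ‖x‖ ^ p ∂μ) ^ (1 / p) := by
  rw [← integral_empirical_mean hn hmom hX hlaw]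
  exact integral_rpow_le_rpow_integral (integrable_empirical_mean hmom hX hlaw)
    (fun ω => by positivity) (by positivity) ((div_le_one (zero_lt_one.trans_le hp)).2 hp)

end Probability

lemma integrable_toReal_Wp_empMeasure_map_proj {d k n : ℕ} {p : ℝ} (hn : 0 < n) (hp : 1 ≤ p)
    {Ω : Type*} [MeasurableSpace Ω] {P : Measure Ω} [IsProbabilityMeasure P]
    {μ : Measure (EuclideanSpace ℝ (Fin d))} [IsProbabilityMeasure μ]
    {X : Fin n → Ω → EuclideanSpace ℝ (Fin d)} (hX : ∀ i, Measurable (X i))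
    (hlaw : ∀ i, P.map (X i) = μ) (hmom : Integrable (fun x => ‖x‖ ^ p) μ)
    (E : Matrix (Fin d) (Fin k) ℝ) :
    Integrable (fun ω =>
      (Wp p ((empMeasure fun i => X i ω).map (proj E)) (μ.map (proj E))).toReal) P :=
  (((integrable_empirical_moment_rpow hp hX hlaw hmom).add (integrable_const _)).mul_const
      ‖projL E‖).mono'
    ((lipschitzWith_toReal_Wp_empMeasure_map_proj hn hp hmom E).continuous.measurable.comp
      (measurable_pi_lambda _ hX)).aestronglyMeasurable
    (ae_of_all _ fun ω => by
      rw [Real.norm_of_nonneg ENNReal.toReal_nonneg]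
      exact toReal_Wp_empMeasure_map_proj_le hn hp hmom E _)

theorem stmt14_general {d k n : ℕ} (hn : 0 < n) (p : ℝ) (hp : 1 ≤ p)
    {Ω : Type*} [MeasurableSpace Ω] (P : Measure Ω) [IsProbabilityMeasure P]
    (μ : Measure (EuclideanSpace ℝ (Fin d))) [IsProbabilityMeasure μ]
    (X : Fin n → Ω → EuclideanSpace ℝ (Fin d))
    (hmeas : ∀ i, Measurable (X i))
    (hlaw : ∀ i, P.map (X i) = μ)
    (hmom : Integrable (fun x => ‖x‖ ^ p) μ) :
    (∀ U V : Matrix (Fin d) (Fin k) ℝ, U ∈ Stiefel d k → V ∈ Stiefel d k →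
      ∀ᵐ ω ∂P,
        |((Wp p ((empMeasure fun i => X i ω).map (proj U)) (μ.map (proj U))).toReal
            - ∫ ω', (Wp p ((empMeasure fun i => X i ω').map (proj U)) (μ.map (proj U))).toReal ∂P)
          - ((Wp p ((empMeasure fun i => X i ω).map (proj V)) (μ.map (proj V))).toReal
            - ∫ ω', (Wp p ((empMeasure fun i => X i ω').map (proj V)) (μ.map (proj V))).toReal ∂P)|
        ≤ (2 * (∫ x, ‖x‖ ^ p ∂μ) ^ (1 / p)
            + ((n : ℝ)⁻¹ * ∑ i, ‖X i ω‖ ^ p) ^ (1 / p)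
            + ∫ ω', ((n : ℝ)⁻¹ * ∑ i, ‖X i ω'‖ ^ p) ^ (1 / p) ∂P)
          * ‖projL (U - V)‖) ∧
    ∫ ω, (2 * (∫ x, ‖x‖ ^ p ∂μ) ^ (1 / p)
            + ((n : ℝ)⁻¹ * ∑ i, ‖X i ω‖ ^ p) ^ (1 / p)
            + ∫ ω', ((n : ℝ)⁻¹ * ∑ i, ‖X i ω'‖ ^ p) ^ (1 / p) ∂P) ∂P
        ≤ 4 * (∫ x, ‖x‖ ^ p ∂μ) ^ (1 / p) := by
  set M := (∫ x, ‖x‖ ^ p ∂μ) ^ (1 / p)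
  set g : Ω → ℝ := fun ω => ((n : ℝ)⁻¹ * ∑ i, ‖X i ω‖ ^ p) ^ (1 / p)
  have hg : Integrable g P := integrable_empirical_moment_rpow hp hmeas hlaw hmom
  have hgM : ∫ ω, g ω ∂P ≤ M := integral_empirical_moment_rpow_le hn hp hmeas hlaw hmom
  have hW := integrable_toReal_Wp_empMeasure_map_proj (k := k) hn hp hmeas hlaw hmom
  refine ⟨fun U V _ _ => ae_of_all _ fun ω => ?_, ?_⟩
  · calc _ ≤ (g ω + M) * ‖projL (U - V)‖ + ∫ ω', (g ω' + M) * ‖projL (U - V)‖ ∂P :=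
          abs_sub_integral_sub_sub_integral_le (hW U) (hW V)
            ((hg.add (integrable_const M)).mul_const _)
            (fun ω => abs_toReal_Wp_empMeasure_map_proj_sub_le hn hp hmom U V _) ω
      _ = _ := by
          rw [integral_mul_const, integral_add hg (integrable_const M), integral_const,
            probReal_univ, one_smul]
          ring
  · have h2Mg : Integrable (fun ω => 2 * M + g ω) P := (integrable_const _).add hg
    rw [integral_add h2Mg (integrable_const _), integral_add (integrable_const _) hg]
    simp only [integral_const, probReal_univ, one_smul]
    linarith

theorem stmt14 {d k n : ℕ} (hn : 0 < n) (p : ℝ) (hp : 1 ≤ p)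
    {Ω : Type*} [MeasurableSpace Ω] (P : Measure Ω) [IsProbabilityMeasure P]
    (μ : Measure (EuclideanSpace ℝ (Fin d))) [IsProbabilityMeasure μ]
    (X : Fin n → Ω → EuclideanSpace ℝ (Fin d))
    (hmeas : ∀ i, Measurable (X i))
    (hlaw : ∀ i, P.map (X i) = μ)
    (hindep : ProbabilityTheory.iIndepFun X P)
    (hmom : Integrable (fun x => ‖x‖ ^ p) μ) :
    (∀ U V : Matrix (Fin d) (Fin k) ℝ, U ∈ Stiefel d k → V ∈ Stiefel d k →
      ∀ᵐ ω ∂P,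
        |((Wp p ((empMeasure fun i => X i ω).map (proj U)) (μ.map (proj U))).toReal
            - ∫ ω', (Wp p ((empMeasure fun i => X i ω').map (proj U)) (μ.map (proj U))).toReal ∂P)
          - ((Wp p ((empMeasure fun i => X i ω).map (proj V)) (μ.map (proj V))).toReal
            - ∫ ω', (Wp p ((empMeasure fun i => X i ω').map (proj V)) (μ.map (proj V))).toReal ∂P)|
        ≤ (2 * (∫ x, ‖x‖ ^ p ∂μ) ^ (1 / p)
            + ((n : ℝ)⁻¹ * ∑ i, ‖X i ω‖ ^ p) ^ (1 / p)
            + ∫ ω', ((n : ℝ)⁻¹ * ∑ i, ‖X i ω'‖ ^ p) ^ (1 / p) ∂P)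
          * ‖projL (U - V)‖) ∧
    ∫ ω, (2 * (∫ x, ‖x‖ ^ p ∂μ) ^ (1 / p)
            + ((n : ℝ)⁻¹ * ∑ i, ‖X i ω‖ ^ p) ^ (1 / p)
            + ∫ ω', ((n : ℝ)⁻¹ * ∑ i, ‖X i ω'‖ ^ p) ^ (1 / p) ∂P) ∂P
        ≤ 4 * (∫ x, ‖x‖ ^ p ∂μ) ^ (1 / p) :=
  stmt14_general hn p hp P μ X hmeas hlaw hmom
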